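/- Let A, B, B', C, C' ∈ ℂ^{r×r} with C + kI and C' + kI invertible for all integers k ≥ 0, A invertible, and A, B, B' pairwise commuting, and C, C' commuting with each other. Then the Appell matrix function F₂ satisfies: F₂(A+I, B, B'; C, C'; x, y) = F₂(A, B, B'; C, C'; x, y) + x·B·F₂(A+I, B+I, B'; C+I, C'; x, y)·C^{-1} + y·B'·F₂(A+I, B, B'+I; C, C'+I; x, y)·C'^{-1}, for |x| + |y| < 1. -/

import Mathlib

/-!
Since `(A + 1)_k = (A)_k + k (A + 1)_{k-1}`, the `(m, n)` term of `F₂(A + I, …)` is the `(m, n)` term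
of `F₂(A, …)` plus `m + n` times the same term with `(A + 1)_{m+n-1}` in place of `(A)_{m+n}`.
In the part weighted by `m`, write `(B)_m = B (B + 1)_{m-1}` and `(C)_m⁻¹ = (C + 1)_{m-1}⁻¹ C⁻¹`;
pulling `B` to the left (it commutes with `A`) and `C⁻¹` to the right (it commutes with `C'`) and
shifting `m ↦ m + 1` gives the series of `x B F₂(A + I, B + I, B'; C + I, C') C⁻¹`. The part weighted
by `n` gives `y B' F₂(A + I, B, B' + I; C, C' + I) C'⁻¹` in the same way. All series converge
absolutely for `‖x‖ + ‖y‖ < 1`: the ratios `(‖A‖ + j) / (j + 1)` and `(‖B‖ + j) ‖(C + j)⁻¹‖` tend to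
`1`, so `‖(A)_k‖ / k!` and `‖(B)_k‖ ‖(C)_k⁻¹‖` grow more slowly than `ρ^k` for every `ρ > 1`.
-/

open Matrix Complex Finset

/-- Matrix Pochhammer symbol: `(A)_0 = I`, `(A)_{n+1} = (A)_n (A + nI)`. -/
noncomputable def poch {r : ℕ} (A : Matrix (Fin r) (Fin r) ℂ) : ℕ → Matrix (Fin r) (Fin r) ℂ
  | 0 => 1
  | n + 1 => poch A n * (A + (n : ℂ) • 1)

/-- Appell matrix function F₂. -/
noncomputable def F2A {r : ℕ} (A B B' C C' : Matrix (Fin r) (Fin r) ℂ) (x y : ℂ) :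
    Matrix (Fin r) (Fin r) ℂ :=
  ∑' p : ℕ × ℕ, (((p.1.factorial : ℂ) * p.2.factorial)⁻¹ * x ^ p.1 * y ^ p.2) •
    (poch A (p.1 + p.2) * poch B p.1 * poch B' p.2 *
      (poch C p.1)⁻¹ * (poch C' p.2)⁻¹)

open Filter Topology

theorem choose_mul_pow_mul_pow_le_add_pow {R : Type*} [CommSemiring R] [PartialOrder R]
    [IsOrderedRing R] {a b : R} (ha : 0 ≤ a) (hb : 0 ≤ b) (m n : ℕ) :
    ((m + n).choose m : R) * a ^ m * b ^ n ≤ (a + b) ^ (m + n) := by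
  rw [add_pow]
  calc ((m + n).choose m : R) * a ^ m * b ^ n = a ^ m * b ^ (m + n - m) * (m + n).choose m := by
        rw [Nat.add_sub_cancel_left]; ring
    _ ≤ _ := single_le_sum (f := fun i => a ^ i * b ^ (m + n - i) * ((m + n).choose i : R))
        (fun i _ => by positivity) (by simp)

theorem exists_prod_range_le_mul_pow {f : ℕ → ℝ} {ρ : ℝ} (hρ : 0 < ρ) (hf₀ : ∀ j, 0 ≤ f j)
    (hf : ∀ᶠ j in atTop, f j ≤ ρ) : ∃ M, ∀ k, ∏ j ∈ range k, f j ≤ M * ρ ^ k := by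
  obtain ⟨N, hN⟩ := eventually_atTop.1 hf
  set g : ℕ → ℝ := fun j => max (f j / ρ) 1
  refine ⟨∏ j ∈ range N, g j, fun k => ?_⟩
  calc ∏ j ∈ range k, f j = (∏ j ∈ range k, f j / ρ) * ρ ^ k := by
        rw [prod_div_distrib, prod_const, card_range, div_mul_cancel₀ _ (by positivity)]
    _ ≤ (∏ j ∈ range k, g j) * ρ ^ k := by
        refine mul_le_mul_of_nonneg_right (prod_le_prod (fun j _ => ?_) fun j _ => ?_) (by positivity)
        · exact div_nonneg (hf₀ j) hρ.le
        · exact le_max_left _ _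
    _ ≤ (∏ j ∈ range (k ⊔ N), g j) * ρ ^ k := by
        refine mul_le_mul_of_nonneg_right ?_ (by positivity)
        exact prod_le_prod_of_subset_of_one_le (range_subset_range.2 le_sup_left)
          (fun j _ => zero_le_one.trans (le_max_right _ _)) fun j _ _ => le_max_right _ _
    _ = (∏ j ∈ range N, g j) * ρ ^ k := by
        congr 1
        refine (prod_subset (by simp) fun j _ hj => ?_).symm
        simp only [mem_range, not_lt] at hj
        exact max_eq_right ((div_le_one hρ).2 (hN j hj))

theorem hasSum_of_hasSum_succ_fst {M : Type*} [AddCommMonoid M] [TopologicalSpace M]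
    {f : ℕ × ℕ → M} {a : M} (h₀ : ∀ n, f (0, n) = 0)
    (h : HasSum (fun p : ℕ × ℕ => f (p.1 + 1, p.2)) a) : HasSum f a := by
  refine (Function.Injective.hasSum_iff (g := fun p : ℕ × ℕ => (p.1 + 1, p.2))
    (fun p q hpq => by simpa [Prod.ext_iff] using hpq) ?_).1 h
  rintro ⟨_ | m, n⟩ hp
  · exact h₀ n
  · exact absurd ⟨(m, n), rfl⟩ hp

theorem hasSum_of_hasSum_succ_snd {M : Type*} [AddCommMonoid M] [TopologicalSpace M]
    {f : ℕ × ℕ → M} {a : M} (h₀ : ∀ m, f (m, 0) = 0)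
    (h : HasSum (fun p : ℕ × ℕ => f (p.1, p.2 + 1)) a) : HasSum f a := by
  refine (Function.Injective.hasSum_iff (g := fun p : ℕ × ℕ => (p.1, p.2 + 1))
    (fun p q hpq => by simpa [Prod.ext_iff] using hpq) ?_).1 h
  rintro ⟨m, _ | n⟩ hp
  · exact h₀ m
  · exact absurd ⟨(m, n), rfl⟩ hp

section

variable {r : ℕ}

local notation "𝕄" => Matrix (Fin r) (Fin r) ℂ

theorem poch_succ_eq_mul_poch_add_one (A : 𝕄) (k : ℕ) :
    poch A (k + 1) = A * poch (A + 1) k := by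
  induction k with
  | zero => simp [poch]
  | succ k ih =>
    rw [poch, ih, mul_assoc, poch]
    congr 2
    push_cast
    rw [add_smul, one_smul, add_assoc, add_comm 1]

theorem Commute.poch_right {X Y : 𝕄} (h : Commute Y X) (n : ℕ) : Commute Y (poch X n) := by
  induction n with
  | zero => exact Commute.one_right Y
  | succ n ih => exact ih.mul_right (h.add_right ((Commute.one_right Y).smul_right _))

theorem poch_add_one (A : 𝕄) (k : ℕ) :
    poch (A + 1) k = poch A k + (k : ℂ) • poch (A + 1) (k - 1) := by
  rcases k with _ | k
  · simp [poch]
  · have hA : Commute A (poch (A + 1) k) :=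
      ((Commute.refl A).add_right (Commute.one_right A)).poch_right k
    rw [poch_succ_eq_mul_poch_add_one A k, Nat.add_sub_cancel, poch, mul_add, mul_add, ← hA.eq,
      mul_one, mul_smul_one, add_assoc, Nat.cast_succ, add_smul, one_smul, add_comm (poch _ k)]

theorem inv_poch_succ (C : 𝕄) (k : ℕ) : (poch C (k + 1))⁻¹ = (poch (C + 1) k)⁻¹ * C⁻¹ := by
  rw [poch_succ_eq_mul_poch_add_one, Matrix.mul_inv_rev]

noncomputable def pochProd (A B B' C C' : 𝕄) (k m n : ℕ) : 𝕄 :=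
  poch A k * poch B m * poch B' n * (poch C m)⁻¹ * (poch C' n)⁻¹

noncomputable def F2Coeff (x y : ℂ) (m n : ℕ) : ℂ :=
  ((m.factorial : ℂ) * n.factorial)⁻¹ * x ^ m * y ^ n

-- The summand of `F2A`, definitionally.
noncomputable def F2Term (A B B' C C' : 𝕄) (x y : ℂ) (p : ℕ × ℕ) : 𝕄 :=
  F2Coeff x y p.1 p.2 • pochProd A B B' C C' (p.1 + p.2) p.1 p.2

theorem succ_mul_F2Coeff_succ_left (x y : ℂ) (m n : ℕ) :
    ((m : ℂ) + 1) * F2Coeff x y (m + 1) n = x * F2Coeff x y m n := by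
  simp only [F2Coeff, Nat.factorial_succ]
  push_cast
  field_simp
  ring

theorem succ_mul_F2Coeff_succ_right (x y : ℂ) (m n : ℕ) :
    ((n : ℂ) + 1) * F2Coeff x y m (n + 1) = y * F2Coeff x y m n := by
  simp only [F2Coeff, Nat.factorial_succ]
  push_cast
  field_simp
  ring

theorem pochProd_add_one (A B B' C C' : 𝕄) (k m n : ℕ) :
    pochProd (A + 1) B B' C C' k m n =
      pochProd A B B' C C' k m n + (k : ℂ) • pochProd (A + 1) B B' C C' (k - 1) m n := by
  simp only [pochProd, poch_add_one A k, add_mul, smul_mul_assoc]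

theorem pochProd_succ_left {A B B' C C' : 𝕄} (hBA : Commute B A) (hCC' : Commute C C')
    (k m n : ℕ) :
    pochProd A B B' C C' k (m + 1) n = B * pochProd A (B + 1) B' (C + 1) C' k m n * C⁻¹ := by
  have hC : C⁻¹ * (poch C' n)⁻¹ = (poch C' n)⁻¹ * C⁻¹ := by
    rw [← Matrix.mul_inv_rev, ← Matrix.mul_inv_rev, (hCC'.poch_right n).eq]
  simp only [pochProd, poch_succ_eq_mul_poch_add_one B, inv_poch_succ C, mul_assoc]
  rw [hC, ← mul_assoc (poch A k), ← (hBA.poch_right k).eq]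
  simp only [mul_assoc]

theorem pochProd_succ_right {A B B' C C' : 𝕄} (hB'A : Commute B' A) (hB'B : Commute B' B)
    (k m n : ℕ) :
    pochProd A B B' C C' k m (n + 1) = B' * pochProd A B (B' + 1) C (C' + 1) k m n * C'⁻¹ := by
  simp only [pochProd, poch_succ_eq_mul_poch_add_one B', inv_poch_succ C', mul_assoc]
  rw [← mul_assoc (poch B m), ← (hB'B.poch_right m).eq, mul_assoc B', ← mul_assoc (poch A k),
    ← (hB'A.poch_right k).eq]
  simp only [mul_assoc]

theorem F2Term_add_one (A B B' C C' : 𝕄) (x y : ℂ) (p : ℕ × ℕ) :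
    F2Term (A + 1) B B' C C' x y p = F2Term A B B' C C' x y p
      + (p.1 : ℂ) • F2Coeff x y p.1 p.2 • pochProd (A + 1) B B' C C' (p.1 + p.2 - 1) p.1 p.2
      + (p.2 : ℂ) • F2Coeff x y p.1 p.2 • pochProd (A + 1) B B' C C' (p.1 + p.2 - 1) p.1 p.2 := by
  rw [F2Term, F2Term, pochProd_add_one, smul_add, add_assoc, ← add_smul, smul_comm]
  push_cast
  rfl

theorem Matrix.inv_smul_of_ne_zero {n α : Type*} [Fintype n] [DecidableEq n] [Field α]
    {c : α} (hc : c ≠ 0) (M : Matrix n n α) : (c • M)⁻¹ = c⁻¹ • M⁻¹ := by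
  have hscalar : (c • (1 : Matrix n n α))⁻¹ = c⁻¹ • 1 :=
    Matrix.inv_eq_right_inv (by rw [smul_mul_smul_comm, mul_inv_cancel₀ hc, mul_one, one_smul])
  rw [← smul_one_mul, Matrix.mul_inv_rev, hscalar, mul_smul_one]


section Norms

attribute [local instance] Matrix.linftyOpNormedRing Matrix.linftyOpNormedAlgebra

theorem norm_F2Term_le (A B B' C C' : 𝕄) (x y : ℂ) (m n : ℕ) :
    ‖F2Term A B B' C C' x y (m, n)‖ ≤
      ‖x‖ ^ m * ‖y‖ ^ n / (m.factorial * n.factorial) * (‖poch A (m + n)‖ *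
        (‖poch B m‖ * ‖(poch C m)⁻¹‖) * (‖poch B' n‖ * ‖(poch C' n)⁻¹‖)) := by
  have hcoeff : ‖F2Coeff x y m n‖ = ‖x‖ ^ m * ‖y‖ ^ n / (m.factorial * n.factorial) := by
    simp [F2Coeff, div_eq_inv_mul, mul_assoc]
  rw [F2Term, norm_smul, hcoeff]
  refine mul_le_mul_of_nonneg_left ?_ (by positivity)
  calc ‖pochProd A B B' C C' (m + n) m n‖
      ≤ ‖poch A (m + n)‖ * ‖poch B m‖ * ‖poch B' n‖ * ‖(poch C m)⁻¹‖ * ‖(poch C' n)⁻¹‖ := by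
        refine (norm_mul_le _ _).trans (mul_le_mul_of_nonneg_right ?_ (norm_nonneg _))
        refine (norm_mul_le _ _).trans (mul_le_mul_of_nonneg_right ?_ (norm_nonneg _))
        refine (norm_mul_le _ _).trans (mul_le_mul_of_nonneg_right ?_ (norm_nonneg _))
        exact norm_mul_le _ _
    _ = _ := by ring

section NonemptyIndex

variable [Nonempty (Fin r)]

theorem norm_add_natCast_smul_one_le (A : 𝕄) (k : ℕ) : ‖A + (k : ℂ) • 1‖ ≤ ‖A‖ + k := by
  simpa [norm_smul] using norm_add_le A ((k : ℂ) • (1 : 𝕄))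

theorem norm_poch_le (A : 𝕄) (k : ℕ) : ‖poch A k‖ ≤ ∏ j ∈ range k, (‖A‖ + j) := by
  induction k with
  | zero => simp [poch]
  | succ k ih =>
    rw [prod_range_succ, poch]
    exact (norm_mul_le _ _).trans
      (mul_le_mul ih (norm_add_natCast_smul_one_le A k) (norm_nonneg _) (by positivity))

theorem norm_inv_poch_le (C : 𝕄) (k : ℕ) :
    ‖(poch C k)⁻¹‖ ≤ ∏ j ∈ range k, ‖(C + (j : ℂ) • 1)⁻¹‖ := by
  induction k with
  | zero => simp [poch]
  | succ k ih =>
    rw [prod_range_succ, poch, Matrix.mul_inv_rev, mul_comm (∏ j ∈ range k, _)]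
    exact (norm_mul_le _ _).trans (mul_le_mul_of_nonneg_left ih (norm_nonneg _))

theorem tendsto_mul_norm_inv_add_natCast_smul_one (b : ℝ) (C : 𝕄) :
    Tendsto (fun k : ℕ => (b + k) * ‖(C + (k : ℂ) • 1)⁻¹‖) atTop (𝓝 1) := by
  have hratio : Tendsto (fun k : ℕ => (b + k) / k) atTop (𝓝 1) := by
    simpa using tendsto_add_mul_div_add_mul_atTop_nhds b 0 1 one_ne_zero
  have hnear_one : Tendsto (fun k : ℕ => (k : ℂ)⁻¹ • C + 1) atTop (𝓝 1) := by
    simpa using (tendsto_inv_atTop_nhds_zero_nat (𝕜 := ℂ)).smul_const C |>.add_const 1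
  have hinv : Tendsto (fun k : ℕ => ‖((k : ℂ)⁻¹ • C + 1)⁻¹‖) atTop (𝓝 1) := by
    have h := (NormedRing.inverse_continuousAt (1 : 𝕄ˣ)).norm.tendsto.comp hnear_one
    simpa [Function.comp_def, ← Matrix.nonsing_inv_eq_ringInverse] using h
  refine (one_mul (1 : ℝ) ▸ hratio.mul hinv).congr' ?_
  filter_upwards [eventually_ne_atTop 0] with k hk
  have hk : (k : ℂ) ≠ 0 := Nat.cast_ne_zero.2 hk
  have hfactor : C + (k : ℂ) • 1 = (k : ℂ) • ((k : ℂ)⁻¹ • C + 1) := by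
    rw [smul_add, smul_smul, mul_inv_cancel₀ hk, one_smul]
  rw [hfactor, Matrix.inv_smul_of_ne_zero hk, norm_smul, norm_inv, Complex.norm_natCast]
  ring

theorem exists_norm_poch_le (A : 𝕄) {ρ : ℝ} (hρ : 1 < ρ) :
    ∃ M, ∀ k, ‖poch A k‖ ≤ M * k.factorial * ρ ^ k := by
  have hlim : Tendsto (fun j : ℕ => (‖A‖ + j) / (1 + j)) atTop (𝓝 1) := by
    simpa using tendsto_add_mul_div_add_mul_atTop_nhds ‖A‖ 1 1 one_ne_zero
  obtain ⟨M, hM⟩ := exists_prod_range_le_mul_pow (zero_lt_one.trans hρ)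
    (fun j => by positivity) (hlim.eventually_le_const hρ)
  refine ⟨M, fun k => (norm_poch_le A k).trans ?_⟩
  have hsplit : ∏ j ∈ range k, (‖A‖ + j) =
      k.factorial * ∏ j ∈ range k, (‖A‖ + j) / (1 + j) := by
    rw [← prod_range_add_one_eq_factorial, Nat.cast_prod, ← prod_mul_distrib]
    refine prod_congr rfl fun j _ => ?_
    push_cast
    field_simp
    ring
  rw [hsplit, mul_comm M, mul_assoc]
  exact mul_le_mul_of_nonneg_left (hM k) (by positivity)

theorem exists_norm_poch_mul_norm_inv_poch_le (B C : 𝕄) {ρ : ℝ} (hρ : 1 < ρ) :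
    ∃ M, ∀ k, ‖poch B k‖ * ‖(poch C k)⁻¹‖ ≤ M * ρ ^ k := by
  obtain ⟨M, hM⟩ := exists_prod_range_le_mul_pow (zero_lt_one.trans hρ)
    (fun j => by positivity)
    ((tendsto_mul_norm_inv_add_natCast_smul_one ‖B‖ C).eventually_le_const hρ)
  refine ⟨M, fun k => ?_⟩
  calc ‖poch B k‖ * ‖(poch C k)⁻¹‖
      ≤ (∏ j ∈ range k, (‖B‖ + j)) * ∏ j ∈ range k, ‖(C + (j : ℂ) • 1)⁻¹‖ :=
        mul_le_mul (norm_poch_le B k) (norm_inv_poch_le C k) (norm_nonneg _) (by positivity)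
    _ ≤ M * ρ ^ k := by rw [← prod_mul_distrib]; exact hM k

theorem exists_norm_F2Term_le (A B B' C C' : 𝕄) (x y : ℂ) {ρ : ℝ} (hρ : 1 < ρ) :
    ∃ M, ∀ m n, ‖F2Term A B B' C C' x y (m, n)‖ ≤ M * (ρ ^ 2 * (‖x‖ + ‖y‖)) ^ (m + n) := by
  obtain ⟨MA, hMA⟩ := exists_norm_poch_le A hρ
  obtain ⟨MB, hMB⟩ := exists_norm_poch_mul_norm_inv_poch_le B C hρ
  obtain ⟨MB', hMB'⟩ := exists_norm_poch_mul_norm_inv_poch_le B' C' hρ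
  have hMA₀ : 0 ≤ MA := by simpa using (norm_nonneg _).trans (hMA 0)
  have hMB₀ : 0 ≤ MB := by simpa using (mul_nonneg (norm_nonneg _) (norm_nonneg _)).trans (hMB 0)
  have hMB'₀ : 0 ≤ MB' := by
    simpa using (mul_nonneg (norm_nonneg _) (norm_nonneg _)).trans (hMB' 0)
  refine ⟨MA * MB * MB', fun m n => (norm_F2Term_le A B B' C C' x y m n).trans ?_⟩
  have hfact : ((m + n).factorial : ℝ) = (m + n).choose m * m.factorial * n.factorial := by
    rw [← Nat.add_choose_mul_factorial_mul_factorial, Nat.choose_symm_add]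
    push_cast
    ring
  calc ‖x‖ ^ m * ‖y‖ ^ n / (m.factorial * n.factorial) * (‖poch A (m + n)‖ *
        (‖poch B m‖ * ‖(poch C m)⁻¹‖) * (‖poch B' n‖ * ‖(poch C' n)⁻¹‖))
      ≤ ‖x‖ ^ m * ‖y‖ ^ n / (m.factorial * n.factorial) *
        ((MA * (m + n).factorial * ρ ^ (m + n)) * (MB * ρ ^ m) * (MB' * ρ ^ n)) := by
        gcongr _ * (?_ * ?_ * ?_)
        · exact hMA _
        · exact hMB _
        · exact hMB' _
    _ = MA * MB * MB' * ((m + n).choose m * (ρ ^ 2 * ‖x‖) ^ m * (ρ ^ 2 * ‖y‖) ^ n) := by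
        rw [hfact]
        field_simp
        ring
    _ ≤ MA * MB * MB' * (ρ ^ 2 * (‖x‖ + ‖y‖)) ^ (m + n) := by
        gcongr
        exact (choose_mul_pow_mul_pow_le_add_pow (by positivity) (by positivity) m n).trans_eq
          (by rw [← mul_add])

end NonemptyIndex

theorem summable_F2Term (A B B' C C' : 𝕄) {x y : ℂ} (hxy : ‖x‖ + ‖y‖ < 1) :
    Summable (F2Term A B B' C C' x y) := by
  rcases isEmpty_or_nonempty (Fin r) with _ | _
  · exact summable_zero.congr fun _ => Subsingleton.elim _ _
  obtain ⟨ρ, hρ, hρxy⟩ : ∃ ρ : ℝ, 1 < ρ ∧ ρ ^ 2 * (‖x‖ + ‖y‖) < 1 := by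
    have hs : 0 ≤ ‖x‖ + ‖y‖ := by positivity
    have hd : 0 < 1 - (‖x‖ + ‖y‖) := sub_pos.2 hxy
    exact ⟨1 + (1 - (‖x‖ + ‖y‖)) / 4, by linarith,
      by nlinarith [mul_nonneg hs hd.le, mul_nonneg (mul_nonneg hs hd.le) hd.le]⟩
  obtain ⟨M, hM⟩ := exists_norm_F2Term_le A B B' C C' x y hρ
  have ht : 0 ≤ ρ ^ 2 * (‖x‖ + ‖y‖) := by positivity
  have hgeom := summable_geometric_of_lt_one ht hρxy
  refine ((hgeom.mul_of_nonneg hgeom (fun _ => by positivity) fun _ => by positivity).mul_left M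
    ).of_norm_bounded fun p => (hM p.1 p.2).trans_eq ?_
  rw [pow_add]

end Norms

theorem hasSum_F2A_shift_fst {A B B' C C' : 𝕄} (hBA : Commute B A) (hCC' : Commute C C')
    {x y : ℂ} (hxy : ‖x‖ + ‖y‖ < 1) :
    HasSum (fun p : ℕ × ℕ => (p.1 : ℂ) • F2Coeff x y p.1 p.2 •
        pochProd A B B' C C' (p.1 + p.2 - 1) p.1 p.2)
      (x • (B * F2A A (B + 1) B' (C + 1) C' x y * C⁻¹)) := by
  have h : HasSum (fun p => x • (B * F2Term A (B + 1) B' (C + 1) C' x y p * C⁻¹))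
      (x • (B * F2A A (B + 1) B' (C + 1) C' x y * C⁻¹)) :=
    (((summable_F2Term A (B + 1) B' (C + 1) C' hxy).hasSum.mul_left B).mul_right C⁻¹).const_smul x
  refine hasSum_of_hasSum_succ_fst (fun n => by simp) ?_
  convert h using 2 with ⟨m, n⟩
  rw [smul_smul, Nat.cast_succ, succ_mul_F2Coeff_succ_left, Nat.add_right_comm, Nat.add_sub_cancel,
    pochProd_succ_left hBA hCC', F2Term, mul_smul, mul_smul_comm, smul_mul_assoc]

theorem hasSum_F2A_shift_snd {A B B' C C' : 𝕄} (hB'A : Commute B' A) (hB'B : Commute B' B)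
    {x y : ℂ} (hxy : ‖x‖ + ‖y‖ < 1) :
    HasSum (fun p : ℕ × ℕ => (p.2 : ℂ) • F2Coeff x y p.1 p.2 •
        pochProd A B B' C C' (p.1 + p.2 - 1) p.1 p.2)
      (y • (B' * F2A A B (B' + 1) C (C' + 1) x y * C'⁻¹)) := by
  have h : HasSum (fun p => y • (B' * F2Term A B (B' + 1) C (C' + 1) x y p * C'⁻¹))
      (y • (B' * F2A A B (B' + 1) C (C' + 1) x y * C'⁻¹)) :=
    (((summable_F2Term A B (B' + 1) C (C' + 1) hxy).hasSum.mul_left B').mul_right C'⁻¹).const_smul y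
  refine hasSum_of_hasSum_succ_snd (fun m => by simp) ?_
  convert h using 2 with ⟨m, n⟩
  rw [smul_smul, Nat.cast_succ, succ_mul_F2Coeff_succ_right, ← Nat.add_assoc, Nat.add_sub_cancel,
    pochProd_succ_right hB'A hB'B, F2Term, mul_smul, mul_smul_comm, smul_mul_assoc]

end

theorem stmt_6_general {r : ℕ} (A B B' C C' : Matrix (Fin r) (Fin r) ℂ)
    (hAB : A * B = B * A) (hAB' : A * B' = B' * A) (hBB' : B * B' = B' * B)
    (hCC' : C * C' = C' * C)
    (x y : ℂ) (hxy : ‖x‖ + ‖y‖ < 1) :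
    F2A (A + 1) B B' C C' x y =
      F2A A B B' C C' x y + x • (B * F2A (A + 1) (B + 1) B' (C + 1) C' x y * C⁻¹)
        + y • (B' * F2A (A + 1) B (B' + 1) C (C' + 1) x y * C'⁻¹) := by
  have hBA : Commute B (A + 1) := (show Commute A B from hAB).symm.add_right (Commute.one_right B)
  have hB'A : Commute B' (A + 1) :=
    (show Commute A B' from hAB').symm.add_right (Commute.one_right B')
  refine (summable_F2Term (A + 1) B B' C C' hxy).hasSum.unique ?_
  rw [funext (F2Term_add_one A B B' C C' x y)]
  exact ((summable_F2Term A B B' C C' hxy).hasSum.add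
    (hasSum_F2A_shift_fst (B' := B') hBA hCC' hxy)).add
      (hasSum_F2A_shift_snd (C := C) (C' := C') hB'A hBB'.symm hxy)

/-- Contiguous relation for the Appell matrix function F₂. -/
theorem stmt_6 {r : ℕ} (A B B' C C' : Matrix (Fin r) (Fin r) ℂ)
    (hC : ∀ k : ℕ, IsUnit (C + (k : ℂ) • 1)) (hC' : ∀ k : ℕ, IsUnit (C' + (k : ℂ) • 1))
    (hA : IsUnit A)
    (hAB : A * B = B * A) (hAB' : A * B' = B' * A) (hBB' : B * B' = B' * B)
    (hCC' : C * C' = C' * C)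
    (x y : ℂ) (hxy : ‖x‖ + ‖y‖ < 1) :
    F2A (A + 1) B B' C C' x y =
      F2A A B B' C C' x y + x • (B * F2A (A + 1) (B + 1) B' (C + 1) C' x y * C⁻¹)
        + y • (B' * F2A (A + 1) B (B' + 1) C (C' + 1) x y * C'⁻¹) :=
  stmt_6_general A B B' C C' hAB hAB' hBB' hCC' x y hxy
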